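/- Every zero z of the monic right quaternionic polynomial f_r(z) = zⁿ + z^{n−1} q_n + ⋯ + z q₂ + q₁ satisfies |z| ≤ (1 + α + β + Σ_{j=1}^{n} |q_j|²)^{1/6}, where α = Σ_{j=1}^{n} |q_j q_{n−1} − q_j q_n² + q_{j−1} q_n − q_{j−2}|², β = Σ_{j=1}^{n} |q_j q_n − q_{j−1}|², with q_{−1} = q₀ = 0. -/

import Mathlib

open scoped Quaternion
open Finset Matrix

noncomputable def specNorm {n : ℕ} (A : Matrix (Fin n) (Fin n) ℍ[ℝ]) : ℝ :=
  sSup {r : ℝ | ∃ x : Fin n → ℍ[ℝ], x ≠ 0 ∧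
    r = Real.sqrt (∑ i, ‖A.mulVec x i‖ ^ 2) / Real.sqrt (∑ i, ‖x i‖ ^ 2)}

/-!
Using the equation to reduce `z ^ n`, `z ^ (n + 1)` and `z ^ (n + 2)` writes each of them as a
right combination `∑ i < n, z ^ i * c i` of lower powers, and the coefficients that appear for the
last two are exactly the quaternions summed in `β` and `α`. By Cauchy–Schwarz,
`‖z‖ ^ (2 * (n + m)) ≤ T * ∑ ‖c i‖ ^ 2` with `T = ∑ i < n, ‖z‖ ^ (2 * i)`, while
`‖z‖ ^ 6 * T ≤ T + ‖z‖ ^ (2 * n) + ‖z‖ ^ (2 * (n + 1)) + ‖z‖ ^ (2 * (n + 2))`.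
Dividing by `T ≥ 1` gives `‖z‖ ^ 6 ≤ 1 + α + β + ∑ ‖q j‖ ^ 2`.
-/

theorem Finset.sum_Icc_one_eq_sum_range {M : Type*} [AddCommMonoid M] (f : ℕ → M) (n : ℕ) :
    ∑ i ∈ Icc 1 n, f i = ∑ i ∈ range n, f (i + 1) := by
  rw [range_eq_Ico, sum_Ico_add', ← Finset.Ico_add_one_right_eq_Icc, zero_add]

theorem norm_sum_mul_sq_le {ι R : Type*} [SeminormedRing R] (s : Finset ι) (f g : ι → R) :
    ‖∑ i ∈ s, f i * g i‖ ^ 2 ≤ (∑ i ∈ s, ‖f i‖ ^ 2) * ∑ i ∈ s, ‖g i‖ ^ 2 :=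
  calc ‖∑ i ∈ s, f i * g i‖ ^ 2 ≤ (∑ i ∈ s, ‖f i‖ * ‖g i‖) ^ 2 := by
        gcongr
        exact (norm_sum_le _ _).trans (sum_le_sum fun i _ => norm_mul_le _ _)
    _ ≤ _ := sum_mul_sq_le_sq_mul_sq _ _ _

theorem pow_mul_geom_sum_le {R : Type*} [Semiring R] [PartialOrder R] [IsOrderedRing R]
    {x : R} (hx : 0 ≤ x) (n k : ℕ) :
    x ^ k * ∑ i ∈ range n, x ^ i ≤ ∑ i ∈ range n, x ^ i + ∑ i ∈ range k, x ^ (n + i) :=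
  calc x ^ k * ∑ i ∈ range n, x ^ i = ∑ i ∈ range n, x ^ (k + i) := by
        simp only [mul_sum, pow_add]
    _ ≤ ∑ i ∈ range k, x ^ i + ∑ i ∈ range n, x ^ (k + i) :=
        le_add_of_nonneg_left (sum_nonneg fun i _ => pow_nonneg hx i)
    _ = ∑ i ∈ range n, x ^ i + ∑ i ∈ range k, x ^ (n + i) := by
        rw [← sum_range_add, add_comm, sum_range_add]

section RootOfMonic

variable {R : Type*} [Ring R] {z : R} {n : ℕ} {q : ℕ → R}

theorem mul_sum_pow_mul_of_root (hz : z ^ n + ∑ i ∈ range n, z ^ i * q (i + 1) = 0)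
    {b : ℕ → R} (hb : b 0 = 0) :
    z * ∑ i ∈ range n, z ^ i * b (i + 1) = ∑ i ∈ range n, z ^ i * (b i - q (i + 1) * b n) := by
  have hzn : z ^ n = -∑ i ∈ range n, z ^ i * q (i + 1) := eq_neg_of_add_eq_zero_left hz
  calc z * ∑ i ∈ range n, z ^ i * b (i + 1) = ∑ i ∈ range (n + 1), z ^ i * b i := by
        simp only [sum_range_succ' _ n, hb, mul_zero, add_zero, mul_sum, pow_succ', mul_assoc]
    _ = ∑ i ∈ range n, z ^ i * b i + z ^ n * b n := sum_range_succ _ n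
    _ = _ := by
        rw [hzn, neg_mul, sum_mul, ← sum_neg_distrib, ← sum_add_distrib]
        exact sum_congr rfl fun i _ => by noncomm_ring

theorem pow_succ_eq_sum_of_root (hq0 : q 0 = 0)
    (hz : z ^ n + ∑ i ∈ range n, z ^ i * q (i + 1) = 0) :
    z ^ (n + 1) = ∑ i ∈ range n, z ^ i * (q (i + 1) * q n - q i) := by
  rw [pow_succ', eq_neg_of_add_eq_zero_left hz, mul_neg, mul_sum_pow_mul_of_root hz hq0,
    ← sum_neg_distrib]
  refine sum_congr rfl fun i _ => ?_
  noncomm_ring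

theorem pow_add_two_eq_sum_of_root (hq0 : q 0 = 0)
    (hz : z ^ n + ∑ i ∈ range n, z ^ i * q (i + 1) = 0) :
    z ^ (n + 2) = ∑ i ∈ range n,
      z ^ i * (q (i + 1) * q (n - 1) - q (i + 1) * q n ^ 2 + q i * q n - q (i - 1)) := by
  have h := mul_sum_pow_mul_of_root hz (b := fun j => q j * q n - q (j - 1)) (by simp [hq0])
  simp only [Nat.add_sub_cancel] at h
  rw [pow_succ', pow_succ_eq_sum_of_root hq0 hz, h]
  exact sum_congr rfl fun i _ => by noncomm_ring

end RootOfMonic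

theorem norm_pow_le_of_pow_add_eq_sum {R : Type*} [SeminormedRing R] [NormOneClass R]
    [NormMulClass R] {z : R} {n k : ℕ} (hn : n ≠ 0) (c : Fin k → ℕ → R)
    (hc : ∀ m : Fin k, z ^ (n + m) = ∑ i ∈ range n, z ^ i * c m i) :
    ‖z‖ ^ (2 * k) ≤ 1 + ∑ m, ∑ i ∈ range n, ‖c m i‖ ^ 2 := by
  set x := ‖z‖ ^ 2
  set T := ∑ i ∈ range n, x ^ i
  have hT : 0 < T := geom_sum_pos (by positivity) hn
  have hnorm (j : ℕ) : ‖z ^ j‖ ^ 2 = x ^ j := by rw [norm_pow, ← pow_mul, mul_comm, pow_mul]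
  have hpow (m : Fin k) : x ^ (n + m) ≤ T * ∑ i ∈ range n, ‖c m i‖ ^ 2 := by
    have h := norm_sum_mul_sq_le (range n) (z ^ ·) (c m)
    simpa only [← hc m, hnorm] using h
  rw [pow_mul]
  refine le_of_mul_le_mul_right ?_ hT
  calc x ^ k * T ≤ T + ∑ m ∈ range k, x ^ (n + m) := pow_mul_geom_sum_le (by positivity) n k
    _ = T + ∑ m : Fin k, x ^ (n + m) := by rw [Fin.sum_univ_eq_sum_range (fun m => x ^ (n + m))]
    _ ≤ T + ∑ m, T * ∑ i ∈ range n, ‖c m i‖ ^ 2 := by gcongr with m; exact hpow m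
    _ = (1 + ∑ m, ∑ i ∈ range n, ‖c m i‖ ^ 2) * T := by rw [← mul_sum]; ring

theorem bound_thm2_general (n : ℕ) (q : ℕ → ℍ[ℝ]) (hq0 : q 0 = 0) (z : ℍ[ℝ])
    (hz : z ^ n + ∑ i ∈ Finset.Icc 1 n, z ^ (i - 1) * q i = 0) :
    ‖z‖ ≤ (1 + (∑ j ∈ Finset.Icc 1 n,
        ‖q j * q (n - 1) - q j * q n ^ 2 + q (j - 1) * q n - q (j - 2)‖ ^ 2) +
      (∑ j ∈ Finset.Icc 1 n, ‖q j * q n - q (j - 1)‖ ^ 2) +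
      ∑ j ∈ Finset.Icc 1 n, ‖q j‖ ^ 2) ^ ((1 : ℝ) / 6) := by
  simp only [sum_Icc_one_eq_sum_range, Nat.add_sub_cancel, Nat.reduceSubDiff] at hz ⊢
  have hn : n ≠ 0 := by rintro rfl; simp at hz
  have h6 := norm_pow_le_of_pow_add_eq_sum (k := 3) hn
    ![fun i => -q (i + 1), fun i => q (i + 1) * q n - q i,
      fun i => q (i + 1) * q (n - 1) - q (i + 1) * q n ^ 2 + q i * q n - q (i - 1)] (by
      intro m
      fin_cases m
      · simpa [← sub_eq_add_neg] using eq_neg_of_add_eq_zero_left hz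
      · exact pow_succ_eq_sum_of_root hq0 hz
      · exact pow_add_two_eq_sum_of_root hq0 hz)
  simp only [Fin.sum_univ_three, Matrix.cons_val, norm_neg, Nat.reduceMul] at h6
  rw [one_div, Real.le_rpow_inv_iff_of_pos (norm_nonneg z) (by positivity) (by norm_num)]
  norm_cast
  linarith

theorem bound_thm2 (n : ℕ) (hn : 3 ≤ n) (q : ℕ → ℍ[ℝ]) (hq0 : q 0 = 0) (z : ℍ[ℝ])
    (hz : z ^ n + ∑ i ∈ Finset.Icc 1 n, z ^ (i - 1) * q i = 0) :
    ‖z‖ ≤ (1 + (∑ j ∈ Finset.Icc 1 n,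
        ‖q j * q (n - 1) - q j * q n ^ 2 + q (j - 1) * q n - q (j - 2)‖ ^ 2) +
      (∑ j ∈ Finset.Icc 1 n, ‖q j * q n - q (j - 1)‖ ^ 2) +
      ∑ j ∈ Finset.Icc 1 n, ‖q j‖ ^ 2) ^ ((1 : ℝ) / 6) :=
  bound_thm2_general n q hq0 z hz
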